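/- Let γ > 0. For every φ₀ ∈ ℓ², the cubic DNLS equation with initial condition φ(0) = φ₀ possesses a unique global solution: there is exactly one continuously differentiable curve φ : [0, ∞) → ℓ² with φ(0) = φ₀ that satisfies i φ̇_n + (φ_{n+1} + φ_{n−1}) + γ|φ_n|²φ_n = 0 for all n ∈ ℤ and all t ≥ 0. -/

import Mathlib

open Set

noncomputable section

/-- The Hilbert space ℓ² of square-summable sequences of complex numbers indexed by ℤ. -/
abbrev l2 : Type := lp (fun _ : ℤ => ℂ) 2

/-- `φ : I → ℓ²` is a solution of the cubic DNLS equation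
`i φ̇ₙ + (φₙ₊₁ + φₙ₋₁) + γ|φₙ|²φₙ = 0` on the set `s`, with derivative curve `φ'`:
it is continuously differentiable and satisfies the equation componentwise. -/
def IsDNLSSol (γ : ℝ) (s : Set ℝ) (φ φ' : ℝ → l2) : Prop :=
  (∀ t ∈ s, HasDerivWithinAt φ (φ' t) s t) ∧ ContinuousOn φ' s ∧
    ∀ t ∈ s, ∀ n : ℤ,
      Complex.I * (φ' t) n + ((φ t) (n + 1) + (φ t) (n - 1))
        + (γ * ‖(φ t) n‖ ^ 2 : ℝ) * (φ t) n = 0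

/-!
The right-hand side `F φ = i (φₙ₊₁ + φₙ₋₁ + γ |φₙ|² φₙ)` is Lipschitz on bounded subsets of ℓ², so
Picard–Lindelöf gives local solutions and Grönwall's inequality gives uniqueness. The field is
skew, `Re ⟪F φ, φ⟫ = 0`: the two shifts are adjoint to each other and the cubic term pairs with `φ`
to the real number `γ ∑ |φₙ|⁴`. Hence the ℓ² norm is conserved, every solution starting in the
ball of radius `‖φ₀‖` stays there and exists for a time `τ` depending only on that ball, and
iterating this local flow and gluing the pieces gives a solution on `[0, ∞)`.
-/

open Metric
open scoped NNReal ENNReal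

theorem continuous_of_forall_lipschitzOnWith_closedBall {E F : Type*} [SeminormedAddGroup E]
    [PseudoMetricSpace F] {v : E → F} (hv : ∀ R, ∃ K, LipschitzOnWith K v (closedBall 0 R)) :
    Continuous v :=
  continuous_iff_continuousAt.2 fun x => by
    obtain ⟨K, hK⟩ := hv (‖x‖ + 1)
    exact hK.continuousOn.continuousAt (closedBall_mem_nhds_of_mem (by simp))

section ODE

variable {E : Type*} [NormedAddCommGroup E] [NormedSpace ℝ E]

theorem hasDerivWithinAt_Ici_of_forall_Icc {f f' : ℝ → E} {τ : ℝ} (hτ : 0 < τ)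
    (hf : ∀ k : ℕ, ∀ t ∈ Icc (k * τ) ((k + 1) * τ),
      HasDerivWithinAt f (f' t) (Icc (k * τ) ((k + 1) * τ)) t)
    {t : ℝ} (ht : 0 ≤ t) : HasDerivWithinAt f (f' t) (Ici 0) t := by
  have hright : HasDerivWithinAt f (f' t) (Ici t) t := by
    have h₁ : ⌊t / τ⌋₊ * τ ≤ t := (le_div_iff₀ hτ).1 (Nat.floor_le (div_nonneg ht hτ.le))
    have h₂ : t < (⌊t / τ⌋₊ + 1) * τ := (div_lt_iff₀ hτ).1 (Nat.lt_floor_add_one _)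
    exact (hf _ t ⟨h₁, h₂.le⟩).mono_of_mem_nhdsWithin (Icc_mem_nhdsGE_of_mem ⟨h₁, h₂⟩)
  rcases ht.eq_or_lt with rfl | ht
  · exact hright
  have hleft : HasDerivWithinAt f (f' t) (Iic t) t := by
    have hk : ((⌈t / τ⌉₊ - 1 : ℕ) : ℝ) + 1 = ⌈t / τ⌉₊ := by
      rw [Nat.cast_sub (Nat.ceil_pos.2 (div_pos ht hτ)), Nat.cast_one, sub_add_cancel]
    have h₁ : ((⌈t / τ⌉₊ - 1 : ℕ) : ℝ) * τ < t := by
      rw [← lt_div_iff₀ hτ]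
      linarith [Nat.ceil_lt_add_one (div_pos ht hτ).le]
    have h₂ : t ≤ (((⌈t / τ⌉₊ - 1 : ℕ) : ℝ) + 1) * τ := by
      rw [hk, ← div_le_iff₀ hτ]
      exact Nat.le_ceil _
    exact (hf _ t ⟨h₁.le, h₂⟩).mono_of_mem_nhdsWithin (Icc_mem_nhdsLE_of_mem ⟨h₁, h₂⟩)
  exact (hleft.union hright).mono (by simp [Iic_union_Ici])

theorem exists_hasDerivWithinAt_Ici_of_flow {v : E → E} {S : Set E} {τ : ℝ} (hτ : 0 < τ)
    {α : E → ℝ → E} (hα : ∀ x ∈ S, α x 0 = x ∧ α x τ ∈ S ∧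
      ∀ t ∈ Icc 0 τ, HasDerivWithinAt (α x) (v (α x t)) (Icc 0 τ) t)
    {x₀ : E} (hx₀ : x₀ ∈ S) :
    ∃ f : ℝ → E, f 0 = x₀ ∧ ∀ t ∈ Ici 0, HasDerivWithinAt f (v (f t)) (Ici 0) t := by
  set x : ℕ → E := fun k => (α · τ)^[k] x₀
  have hxS : ∀ k, x k ∈ S := by
    intro k
    induction k with
    | zero => exact hx₀
    | succ k ih => simpa only [x, Function.iterate_succ_apply'] using (hα _ ih).2.1
  set f : ℝ → E := fun t => α (x ⌊t / τ⌋₊) (t - ⌊t / τ⌋₊ * τ)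
  have hpiece : ∀ k : ℕ, EqOn f (fun t => α (x k) (t - k * τ)) (Icc (k * τ) ((k + 1) * τ)) := by
    intro k t ht
    rcases ht.2.lt_or_eq with hlt | rfl
    · have ht₀ : 0 ≤ t := (by positivity : (0 : ℝ) ≤ k * τ).trans ht.1
      have : ⌊t / τ⌋₊ = k := (Nat.floor_eq_iff (div_nonneg ht₀ hτ.le)).2
        ⟨(le_div_iff₀ hτ).2 ht.1, (div_lt_iff₀ hτ).2 hlt⟩
      simp only [f, this]
    · -- at the right end the floor jumps to `k + 1`, and the next piece starts at `α (x k) τ`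
      have : ⌊(k + 1) * τ / τ⌋₊ = k + 1 := by
        rw [mul_div_cancel_right₀ _ hτ.ne']; exact_mod_cast Nat.floor_natCast (k + 1)
      simp only [f, this, Nat.cast_add, Nat.cast_one, sub_self, (hα _ (hxS _)).1]
      simp only [x, Function.iterate_succ_apply']
      congr 1; ring
  refine ⟨f, by simp [f, x, (hα x₀ hx₀).1], fun t ht => ?_⟩
  refine hasDerivWithinAt_Ici_of_forall_Icc (f' := fun s => v (f s)) hτ (fun k t ht => ?_) ht
  have hshift : MapsTo (· - k * τ) (Icc (k * τ) ((k + 1) * τ)) (Icc 0 τ) :=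
    fun s hs => ⟨by linarith [hs.1], by linarith [hs.2]⟩
  have := ((hα _ (hxS k)).2.2 _ (hshift ht)).scomp t
    ((hasDerivWithinAt_id t _).sub_const (k * τ : ℝ)) hshift
  rw [one_smul] at this
  rw [hpiece k ht]
  exact this.congr (hpiece k) (hpiece k ht)

theorem exists_flow_of_lipschitzOnWith [CompleteSpace E] {v : E → E} {R : ℝ} (hR : 0 ≤ R)
    {K : ℝ≥0} (hv : LipschitzOnWith K v (closedBall 0 (R + 1))) :
    ∃ τ > 0, ∃ α : E → ℝ → E, ∀ x ∈ closedBall 0 R, α x 0 = x ∧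
      ∀ t ∈ Icc 0 τ, HasDerivWithinAt (α x) (v (α x t)) (Icc 0 τ) t := by
  obtain ⟨L, hbound⟩ : ∃ L : ℝ≥0, ∀ y ∈ closedBall (0 : E) (R + 1), ‖v y‖ ≤ L := by
    refine ⟨‖v 0‖₊ + K * ⟨R + 1, by positivity⟩, fun y hy => ?_⟩
    calc ‖v y‖ ≤ ‖v 0‖ + ‖v y - v 0‖ := norm_le_norm_add_norm_sub' _ _
      _ ≤ ‖v 0‖ + K * ‖y - 0‖ := by
        gcongr; exact hv.norm_sub_le hy (mem_closedBall_self (by linarith))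
      _ ≤ ‖v 0‖ + K * (R + 1) := by gcongr; simpa using hy
  set τ : ℝ := 1 / (L + 1)
  have hτ : 0 < τ := by positivity
  have hpl : IsPicardLindelof (fun _ => v) (tmin := 0) (tmax := τ) ⟨0, le_rfl, hτ.le⟩ 0
      (⟨R + 1, by positivity⟩ : ℝ≥0) (⟨R, hR⟩ : ℝ≥0) L K := by
    refine ⟨fun _ _ => hv, fun _ _ => continuousOn_const, fun _ _ y hy => hbound y hy, ?_⟩
    show (L : ℝ) * max (τ - 0) (0 - 0) ≤ (R + 1) - R
    rw [sub_zero, sub_self, max_eq_left hτ.le, add_sub_cancel_left, mul_one_div,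
      div_le_one (by positivity)]
    linarith
  obtain ⟨α, hα⟩ := hpl.exists_forall_mem_closedBall_eq_forall_mem_Icc_hasDerivWithinAt
  exact ⟨τ, hτ, α, hα⟩

theorem eqOn_Ici_of_hasDerivWithinAt {v : E → E}
    (hv : ∀ R, ∃ K, LipschitzOnWith K v (closedBall 0 R)) {f g : ℝ → E}
    (hf : ∀ t ∈ Ici 0, HasDerivWithinAt f (v (f t)) (Ici 0) t)
    (hg : ∀ t ∈ Ici 0, HasDerivWithinAt g (v (g t)) (Ici 0) t) (h₀ : f 0 = g 0) :
    EqOn f g (Ici 0) := by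
  intro T hT
  have hfc : ContinuousOn f (Icc 0 T) := fun t ht =>
    (hf t ht.1).continuousWithinAt.mono Icc_subset_Ici_self
  have hgc : ContinuousOn g (Icc 0 T) := fun t ht =>
    (hg t ht.1).continuousWithinAt.mono Icc_subset_Ici_self
  obtain ⟨C, hC⟩ := isCompact_Icc.exists_bound_of_continuousOn (hfc.prodMk hgc)
  obtain ⟨K, hK⟩ := hv C
  refine ODE_solution_unique_of_mem_Icc_right (v := fun _ => v) (s := fun _ => closedBall 0 C)
    (fun _ _ => hK) hfc (fun t ht => (hf t ht.1).mono (Ici_subset_Ici.2 ht.1))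
    (fun t ht => mem_closedBall_zero_iff.2 ((norm_fst_le _).trans (hC t ⟨ht.1, ht.2.le⟩)))
    hgc (fun t ht => (hg t ht.1).mono (Ici_subset_Ici.2 ht.1))
    (fun t ht => mem_closedBall_zero_iff.2 ((norm_snd_le _).trans (hC t ⟨ht.1, ht.2.le⟩)))
    h₀ ⟨hT, le_rfl⟩

end ODE

section Conservative

variable {𝕜 F : Type*} [RCLike 𝕜] [NormedAddCommGroup F] [InnerProductSpace 𝕜 F]
  [NormedSpace ℝ F]

theorem norm_eq_of_re_inner_deriv_eq_zero {f f' : ℝ → F} {a b : ℝ}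
    (hf : ∀ t ∈ Icc a b, HasDerivWithinAt f (f' t) (Icc a b) t)
    (hf' : ∀ t ∈ Icc a b, RCLike.re (inner 𝕜 (f' t) (f t)) = 0) :
    ∀ t ∈ Icc a b, ‖f t‖ = ‖f a‖ := by
  have hderiv : ∀ t ∈ Icc a b,
      HasDerivWithinAt (fun s => inner 𝕜 (f s) (f s)) 0 (Icc a b) t := by
    intro t ht
    convert (hf t ht).inner 𝕜 (hf t ht) using 1
    rw [← inner_conj_symm (f t) (f' t), add_comm, RCLike.add_conj, hf' t ht, RCLike.ofReal_zero,
      mul_zero]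
  intro t ht
  have hconst := constant_of_has_deriv_right_zero
    (fun s hs => (hderiv s hs).continuousWithinAt)
    (fun s hs => (hderiv s (Ico_subset_Icc_self hs)).mono_of_mem_nhdsWithin
      (Icc_mem_nhdsGE_of_mem hs)) t ht
  rw [inner_self_eq_norm_sq_to_K, inner_self_eq_norm_sq_to_K] at hconst
  exact (sq_eq_sq₀ (norm_nonneg _) (norm_nonneg _)).1 (by exact_mod_cast hconst)

theorem exists_hasDerivWithinAt_Ici_of_re_inner_eq_zero [CompleteSpace F] {v : F → F}
    (hv : ∀ R, ∃ K, LipschitzOnWith K v (closedBall 0 R))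
    (hskew : ∀ x, RCLike.re (inner 𝕜 (v x) x) = 0) (x₀ : F) :
    ∃ f : ℝ → F, f 0 = x₀ ∧ ∀ t ∈ Ici 0, HasDerivWithinAt f (v (f t)) (Ici 0) t := by
  obtain ⟨K, hK⟩ := hv (‖x₀‖ + 1)
  obtain ⟨τ, hτ, α, hα⟩ := exists_flow_of_lipschitzOnWith (norm_nonneg x₀) hK
  refine exists_hasDerivWithinAt_Ici_of_flow hτ (S := closedBall 0 ‖x₀‖)
    (fun x hx => ⟨(hα x hx).1, ?_, (hα x hx).2⟩) (mem_closedBall_zero_iff.2 le_rfl)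
  have := norm_eq_of_re_inner_deriv_eq_zero (𝕜 := 𝕜) (hα x hx).2 (fun t _ => hskew _) τ
    ⟨hτ.le, le_rfl⟩
  rwa [mem_closedBall_zero_iff, this, (hα x hx).1, ← mem_closedBall_zero_iff]

end Conservative

theorem norm_sq_smul_sub_norm_sq_smul_le {E : Type*} [NormedAddCommGroup E] [NormedSpace ℝ E]
    {a b : E} {R : ℝ} (ha : ‖a‖ ≤ R) (hb : ‖b‖ ≤ R) :
    ‖‖a‖ ^ 2 • a - ‖b‖ ^ 2 • b‖ ≤ 3 * R ^ 2 * ‖a - b‖ := by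
  have hab : |‖a‖ - ‖b‖| ≤ ‖a - b‖ := abs_norm_sub_norm_le a b
  calc ‖‖a‖ ^ 2 • a - ‖b‖ ^ 2 • b‖
      = ‖‖a‖ ^ 2 • (a - b) + ((‖a‖ + ‖b‖) * (‖a‖ - ‖b‖)) • b‖ := by
        congr 1; module
    _ ≤ ‖a‖ ^ 2 * ‖a - b‖ + (‖a‖ + ‖b‖) * |‖a‖ - ‖b‖| * ‖b‖ := by
        refine (norm_add_le _ _).trans_eq ?_
        rw [norm_smul, norm_smul, Real.norm_eq_abs, Real.norm_eq_abs, abs_mul,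
          abs_of_nonneg (by positivity), abs_of_nonneg (by positivity)]
    _ ≤ R ^ 2 * ‖a - b‖ + (R + R) * ‖a - b‖ * R := by
        have hR : 0 ≤ R := (norm_nonneg a).trans ha
        gcongr
    _ = 3 * R ^ 2 * ‖a - b‖ := by ring

namespace l2

open Complex

theorem memℓp_comp_add_right (x : l2) (c : ℤ) : Memℓp (fun n => x (n + c)) 2 :=
  (memℓp_gen_iff (by norm_num)).2 <|
    (Equiv.addRight c).summable_iff.2 ((memℓp_gen_iff (by norm_num)).1 (lp.memℓp x))

def shift (c : ℤ) : l2 →ₗᵢ[ℂ] l2 where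
  toFun x := ⟨fun n => x (n + c), memℓp_comp_add_right x c⟩
  map_add' _ _ := rfl
  map_smul' _ _ := rfl
  norm_map' x := by
    simp only [lp.norm_eq_tsum_rpow (show 0 < (2 : ℝ≥0∞).toReal by norm_num)]
    exact congrArg (· ^ _) ((Equiv.addRight c).tsum_eq fun n => ‖x n‖ ^ _)

@[simp]
theorem shift_apply (c : ℤ) (x : l2) (n : ℤ) : shift c x n = x (n + c) := rfl

theorem inner_shift_left (c : ℤ) (x y : l2) :
    inner ℂ (shift c x) y = inner ℂ x (shift (-c) y) := by
  rw [← (shift (-c)).inner_map_map]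
  congr 1
  ext n
  simp

def cubic (x : l2) : l2 :=
  ⟨fun n => ‖x n‖ ^ 2 • x n, ((lp.memℓp x).const_smul (‖x‖ ^ 2)).mono' fun n => by
    simp only [Pi.smul_apply, norm_smul, norm_pow, norm_norm]
    gcongr
    exact lp.norm_apply_le_norm two_ne_zero x n⟩

@[simp]
theorem cubic_apply (x : l2) (n : ℤ) : cubic x n = ‖x n‖ ^ 2 • x n := rfl

theorem lipschitzOnWith_cubic (R : ℝ) :
    LipschitzOnWith (3 * R ^ 2).toNNReal cubic (closedBall 0 R) := by
  refine LipschitzOnWith.of_dist_le' fun x hx y hy => ?_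
  rw [mem_closedBall_zero_iff] at hx hy
  rw [dist_eq_norm, dist_eq_norm]
  calc ‖cubic x - cubic y‖ ≤ ‖(3 * R ^ 2) • (x - y)‖ := lp.norm_mono two_ne_zero fun n => by
        simp only [lp.coeFn_sub, lp.coeFn_smul, Pi.sub_apply, Pi.smul_apply, cubic_apply,
          norm_smul, Real.norm_eq_abs, abs_of_nonneg (by positivity : (0 : ℝ) ≤ 3 * R ^ 2)]
        exact norm_sq_smul_sub_norm_sq_smul_le
          ((lp.norm_apply_le_norm two_ne_zero x n).trans hx)
          ((lp.norm_apply_le_norm two_ne_zero y n).trans hy)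
    _ = 3 * R ^ 2 * ‖x - y‖ := by rw [norm_smul, Real.norm_eq_abs, abs_of_nonneg (by positivity)]

theorem im_inner_cubic_self (x : l2) : (inner ℂ (cubic x) x).im = 0 := by
  rw [← conj_eq_iff_im, inner_conj_symm, lp.inner_eq_tsum, lp.inner_eq_tsum]
  refine tsum_congr fun n => ?_
  simp only [cubic_apply, ← Complex.coe_smul, inner_smul_left, inner_smul_right, conj_ofReal]

end l2

open l2 in
def dnlsField (γ : ℝ) (x : l2) : l2 :=
  Complex.I • (shift 1 x + shift (-1) x + (γ : ℂ) • cubic x)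

theorem exists_lipschitzOnWith_dnlsField (γ R : ℝ) :
    ∃ K, LipschitzOnWith K (dnlsField γ) (closedBall 0 R) :=
  ⟨_, (lipschitzWith_smul Complex.I).comp_lipschitzOnWith
    ((((l2.shift 1).lipschitz.lipschitzOnWith).add (l2.shift (-1)).lipschitz.lipschitzOnWith).add
      ((lipschitzWith_smul (γ : ℂ)).comp_lipschitzOnWith (l2.lipschitzOnWith_cubic R)))⟩

theorem re_inner_dnlsField_self (γ : ℝ) (x : l2) : (inner ℂ (dnlsField γ x) x).re = 0 := by
  have hshift : (inner ℂ (l2.shift 1 x) x + inner ℂ (l2.shift (-1) x) x).im = 0 := by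
    rw [l2.inner_shift_left, ← inner_conj_symm x, Complex.add_im, Complex.conj_im,
      neg_add_cancel]
  simp only [dnlsField, inner_smul_left, inner_add_left]
  simp [Complex.mul_re, hshift, l2.im_inner_cubic_self]

theorem dnls_equation_iff {γ : ℝ} {x y : l2} :
    (∀ n : ℤ, Complex.I * y n + (x (n + 1) + x (n - 1)) + (γ * ‖x n‖ ^ 2 : ℝ) * x n = 0) ↔
      y = dnlsField γ x := by
  have hF : ∀ n, dnlsField γ x n =
      Complex.I * (x (n + 1) + x (n - 1) + (γ * ‖x n‖ ^ 2 : ℝ) * x n) := fun n => by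
    simp only [dnlsField, lp.coeFn_smul, lp.coeFn_add, Pi.add_apply, Pi.smul_apply,
      l2.shift_apply, l2.cubic_apply, smul_eq_mul, Complex.real_smul, sub_eq_add_neg]
    push_cast
    ring
  constructor
  · intro h
    ext n
    rw [hF]
    linear_combination (-Complex.I) * h n + y n * Complex.I_sq
  · rintro rfl n
    rw [hF]
    linear_combination (x (n + 1) + x (n - 1) + (γ * ‖x n‖ ^ 2 : ℝ) * x n) * Complex.I_sq

theorem IsDNLSSol.hasDerivWithinAt_dnlsField {γ : ℝ} {s : Set ℝ} {φ φ' : ℝ → l2}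
    (h : IsDNLSSol γ s φ φ') {t : ℝ} (ht : t ∈ s) :
    HasDerivWithinAt φ (dnlsField γ (φ t)) s t :=
  dnls_equation_iff.1 (h.2.2 t ht) ▸ h.1 t ht

theorem DNLS_global_existence_uniqueness_general (γ : ℝ) (φ₀ : l2) :
    (∃ φ φ' : ℝ → l2, φ 0 = φ₀ ∧ IsDNLSSol γ (Ici 0) φ φ') ∧
      (∀ φ₁ φ₁' φ₂ φ₂' : ℝ → l2,
        φ₁ 0 = φ₀ → IsDNLSSol γ (Ici 0) φ₁ φ₁' →
        φ₂ 0 = φ₀ → IsDNLSSol γ (Ici 0) φ₂ φ₂' →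
        EqOn φ₁ φ₂ (Ici 0)) := by
  have hlip := exists_lipschitzOnWith_dnlsField γ
  refine ⟨?_, fun φ₁ φ₁' φ₂ φ₂' h₁0 h₁ h₂0 h₂ => ?_⟩
  · obtain ⟨φ, hφ0, hφ⟩ :=
      exists_hasDerivWithinAt_Ici_of_re_inner_eq_zero (𝕜 := ℂ) hlip
        (re_inner_dnlsField_self γ) φ₀
    refine ⟨φ, fun t => dnlsField γ (φ t), hφ0, hφ, ?_, fun t _ => dnls_equation_iff.2 rfl⟩
    exact (continuous_of_forall_lipschitzOnWith_closedBall hlip).comp_continuousOn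
      fun t ht => (hφ t ht).continuousWithinAt
  · exact eqOn_Ici_of_hasDerivWithinAt hlip (fun _ => h₁.hasDerivWithinAt_dnlsField)
      (fun _ => h₂.hasDerivWithinAt_dnlsField) (h₁0.trans h₂0.symm)

/-- Global existence and uniqueness for the cubic DNLS: for every `φ₀ ∈ ℓ²` there is
exactly one continuously differentiable curve `φ : [0,∞) → ℓ²` with `φ(0) = φ₀` solving
the DNLS equation componentwise. -/
theorem DNLS_global_existence_uniqueness (γ : ℝ) (hγ : 0 < γ) (φ₀ : l2) :
    (∃ φ φ' : ℝ → l2, φ 0 = φ₀ ∧ IsDNLSSol γ (Ici 0) φ φ') ∧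
      (∀ φ₁ φ₁' φ₂ φ₂' : ℝ → l2,
        φ₁ 0 = φ₀ → IsDNLSSol γ (Ici 0) φ₁ φ₁' →
        φ₂ 0 = φ₀ → IsDNLSSol γ (Ici 0) φ₂ φ₂' →
        EqOn φ₁ φ₂ (Ici 0)) :=
  DNLS_global_existence_uniqueness_general γ φ₀
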